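/- arXiv:1701.06866 — 4 statements merged into one kernel-verified Lean document; each statement's English description precedes it below -/
import Mathlib

section
/- Let x, p ∈ ℝ³ with x ≠ 0 satisfy G(x,p) = −1/2. Then, with ℓ = x × p and a = p × ℓ − x/|x|, one has ‖ℓ‖² + ‖a‖² = 1; in particular ‖ℓ‖ ≤ 1, and the third component ℓ₃ = x₁p₂ − x₂p₁ of the angular momentum satisfies |ℓ₃| ≤ 1. -/
/-- Euclidean dot product on `Fin 3 → ℝ`. -/
noncomputable def dot3 (x p : Fin 3 → ℝ) : ℝ := x 0 * p 0 + x 1 * p 1 + x 2 * p 2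

/-- Cross product on `Fin 3 → ℝ`. -/
noncomputable def cross3 (x p : Fin 3 → ℝ) : Fin 3 → ℝ :=
  ![x 1 * p 2 - x 2 * p 1, x 2 * p 0 - x 0 * p 2, x 0 * p 1 - x 1 * p 0]

/-- Euclidean norm on `Fin 3 → ℝ`. -/
noncomputable def norm3 (x : Fin 3 → ℝ) : ℝ := Real.sqrt (dot3 x x)

/-- The Kepler Hamiltonian `G(x,p) = |p|²/2 − 1/|x|`. -/
noncomputable def keplerG (x p : Fin 3 → ℝ) : ℝ := norm3 p ^ 2 / 2 - 1 / norm3 x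

/-!
With `ℓ = x × p`, the vector `p × ℓ` is orthogonal to `p` and `ℓ`, so `|p × ℓ|² = |p|²|ℓ|²`,
and `(p × ℓ) · x = ℓ · (x × p) = |ℓ|²`. Expanding `|a|² = |p × ℓ − x/|x||²` therefore gives
`|a|² = |ℓ|² (|p|² − 2/|x|) + 1 = 1 + 2 G |ℓ|²`, which on the energy surface `G = −1/2` is the
claimed identity.
-/

open Matrix

noncomputable def rungeLenz (x p : Fin 3 → ℝ) : Fin 3 → ℝ :=
  cross3 p (cross3 x p) - (norm3 x)⁻¹ • x

lemma dot3_eq_dotProduct (x p : Fin 3 → ℝ) : dot3 x p = x ⬝ᵥ p := by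
  simp [dot3, dotProduct, Fin.sum_univ_three]

lemma cross3_eq_crossProduct (x p : Fin 3 → ℝ) : cross3 x p = x ⨯₃ p := by
  simp [cross3, crossProduct]

lemma dotProduct_self_nonneg {n : Type*} [Fintype n] (x : n → ℝ) : 0 ≤ x ⬝ᵥ x :=
  Fintype.sum_nonneg fun i => mul_self_nonneg (x i)

lemma norm3_sq (x : Fin 3 → ℝ) : norm3 x ^ 2 = x ⬝ᵥ x := by
  rw [norm3, dot3_eq_dotProduct, Real.sq_sqrt (dotProduct_self_nonneg x)]

lemma norm3_pos {x : Fin 3 → ℝ} (hx : x ≠ 0) : 0 < norm3 x :=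
  Real.sqrt_pos.2 <| by
    rw [dot3_eq_dotProduct]
    exact (dotProduct_self_nonneg x).lt_of_ne' (dotProduct_self_eq_zero.not.2 hx)

lemma abs_apply_le_norm3 (v : Fin 3 → ℝ) (i : Fin 3) : |v i| ≤ norm3 v := by
  refine Real.abs_le_sqrt ?_
  rw [sq, dot3_eq_dotProduct]
  exact Finset.single_le_sum (f := fun j => v j * v j) (fun j _ => mul_self_nonneg (v j))
    (Finset.mem_univ i)

lemma dotProduct_cross_cross_self (x p : Fin 3 → ℝ) :
    p ⨯₃ (x ⨯₃ p) ⬝ᵥ p ⨯₃ (x ⨯₃ p) = (p ⬝ᵥ p) * (x ⨯₃ p ⬝ᵥ x ⨯₃ p) := by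
  rw [cross_dot_cross, dot_cross_self]
  ring

lemma dotProduct_cross_cross_self_left (x p : Fin 3 → ℝ) :
    x ⬝ᵥ p ⨯₃ (x ⨯₃ p) = x ⨯₃ p ⬝ᵥ x ⨯₃ p := by
  rw [triple_product_permutation, triple_product_permutation]

theorem norm3_rungeLenz_sq {x : Fin 3 → ℝ} (hx : x ≠ 0) (p : Fin 3 → ℝ) :
    norm3 (rungeLenz x p) ^ 2 = 1 + 2 * keplerG x p * norm3 (cross3 x p) ^ 2 := by
  have hr := norm3_pos hx
  simp only [rungeLenz, keplerG, norm3_sq, cross3_eq_crossProduct, sub_dotProduct, dotProduct_sub,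
    smul_dotProduct, dotProduct_smul, smul_eq_mul, dotProduct_cross_cross_self,
    dotProduct_comm (p ⨯₃ (x ⨯₃ p)) x, dotProduct_cross_cross_self_left]
  rw [← norm3_sq x]
  field_simp
  ring

/-- on the energy surface `Σ(−1/2)`, with `ℓ = x × p` and
`a = p × ℓ − x/|x|`, one has `‖ℓ‖² + ‖a‖² = 1`, `‖ℓ‖ ≤ 1`, and `|ℓ₃| ≤ 1`. -/
theorem stmt1 (x p : Fin 3 → ℝ) (hx : x ≠ 0) (hG : keplerG x p = -(1/2)) :
    norm3 (cross3 x p) ^ 2 + norm3 (cross3 p (cross3 x p) - (norm3 x)⁻¹ • x) ^ 2 = 1 ∧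
    norm3 (cross3 x p) ≤ 1 ∧
    |x 0 * p 1 - x 1 * p 0| ≤ 1 := by
  have hsum : norm3 (cross3 x p) ^ 2 + norm3 (rungeLenz x p) ^ 2 = 1 := by
    rw [norm3_rungeLenz_sq hx, hG]
    ring
  have hℓ_sq : norm3 (cross3 x p) ^ 2 ≤ 1 := by
    linarith [sq_nonneg (norm3 (rungeLenz x p))]
  have hℓ : norm3 (cross3 x p) ≤ 1 := (sq_le_one_iff₀ (Real.sqrt_nonneg _)).1 hℓ_sq
  exact ⟨hsum, hℓ, (abs_apply_le_norm3 (cross3 x p) 2).trans hℓ⟩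
end

section
/- Let x, p ∈ ℝ³ with x ≠ 0, and set ℓ = x × p, a = p × ℓ − x/|x|. If ℓ ≠ 0, then p = (ℓ × a)/‖ℓ‖² + (ℓ × x)/(‖ℓ‖²·|x|); if moreover G(x,p) = −1/2, then ‖p − (ℓ × a)/‖ℓ‖²‖ = 1/‖ℓ‖, i.e. p lies on the circle in momentum space with center (ℓ × a)/‖ℓ‖² and radius 1/‖ℓ‖. -/
open Matrix

section CommRing

variable {R : Type*} [CommRing R]

lemma ne_zero_of_cross_ne_zero_left {x p : Fin 3 → R} (h : x ⨯₃ p ≠ 0) : x ≠ 0 := by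
  rintro rfl
  simp at h

-- With `ℓ = x × p` and `a = p × ℓ − c x`: `ℓ × a = |ℓ|² p − c (ℓ × x)`, because `ℓ ⊥ p`.
lemma cross_cross_runge_lenz (x p : Fin 3 → R) (c : R) :
    x ⨯₃ p ⨯₃ (p ⨯₃ (x ⨯₃ p) - c • x) =
      (x ⨯₃ p ⬝ᵥ x ⨯₃ p) • p - c • x ⨯₃ p ⨯₃ x := by
  rw [map_sub, map_smul, cross_cross_eq_smul_sub_smul', dot_cross_self, zero_smul, sub_zero]

lemma cross_dot_cross_self_of_dotProduct_eq_zero {u v : Fin 3 → R} (h : u ⬝ᵥ v = 0) :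
    u ⨯₃ v ⬝ᵥ u ⨯₃ v = (u ⬝ᵥ u) * (v ⬝ᵥ v) := by
  rw [cross_dot_cross, h, dotProduct_comm v u, h, mul_zero, sub_zero]

end CommRing

lemma dotProduct_self_nonneg_s2 {n R : Type*} [Fintype n] [CommRing R] [LinearOrder R]
    [IsStrictOrderedRing R] (v : n → R) : 0 ≤ v ⬝ᵥ v :=
  Finset.sum_nonneg fun i _ => mul_self_nonneg (v i)

lemma eq_smul_cross_runge_lenz_add {K : Type*} [Field K] {x p : Fin 3 → K}
    (hl : x ⨯₃ p ⬝ᵥ x ⨯₃ p ≠ 0) (c : K) :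
    p = (x ⨯₃ p ⬝ᵥ x ⨯₃ p)⁻¹ • x ⨯₃ p ⨯₃ (p ⨯₃ (x ⨯₃ p) - c • x) +
      ((x ⨯₃ p ⬝ᵥ x ⨯₃ p)⁻¹ * c) • x ⨯₃ p ⨯₃ x := by
  rw [cross_cross_runge_lenz, smul_sub, smul_smul, smul_smul, inv_mul_cancel₀ hl, one_smul,
    sub_add_cancel]

lemma norm3_eq_sqrt_dotProduct (x : Fin 3 → ℝ) : norm3 x = √(x ⬝ᵥ x) := by
  rw [norm3, vec3_dotProduct, dot3]

lemma norm3_smul (c : ℝ) (x : Fin 3 → ℝ) : norm3 (c • x) = |c| * norm3 x := by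
  rw [norm3_eq_sqrt_dotProduct, norm3_eq_sqrt_dotProduct, dotProduct_smul, smul_dotProduct,
    smul_eq_mul, smul_eq_mul, ← mul_assoc, Real.sqrt_mul (mul_self_nonneg c),
    Real.sqrt_mul_self_eq_abs]

lemma norm3_cross_of_dotProduct_eq_zero {u v : Fin 3 → ℝ} (h : u ⬝ᵥ v = 0) :
    norm3 (u ⨯₃ v) = norm3 u * norm3 v := by
  rw [norm3_eq_sqrt_dotProduct, cross_dot_cross_self_of_dotProduct_eq_zero h,
    Real.sqrt_mul (dotProduct_self_nonneg_s2 u), ← norm3_eq_sqrt_dotProduct,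
    ← norm3_eq_sqrt_dotProduct]

theorem stmt2_general (x p : Fin 3 → ℝ)
    (hl : cross3 x p ≠ 0) :
    p = (norm3 (cross3 x p) ^ 2)⁻¹ •
          cross3 (cross3 x p) (cross3 p (cross3 x p) - (norm3 x)⁻¹ • x)
        + (norm3 (cross3 x p) ^ 2 * norm3 x)⁻¹ • cross3 (cross3 x p) x ∧
    (keplerG x p = -(1/2) →
      norm3 (p - (norm3 (cross3 x p) ^ 2)⁻¹ •
          cross3 (cross3 x p) (cross3 p (cross3 x p) - (norm3 x)⁻¹ • x))
        = 1 / norm3 (cross3 x p)) := by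
  simp only [cross3_eq_crossProduct] at hl ⊢
  have hL := norm3_pos hl
  have hR := norm3_pos (ne_zero_of_cross_ne_zero_left hl)
  have hp := eq_smul_cross_runge_lenz_add (norm3_sq (x ⨯₃ p) ▸ (pow_pos hL 2).ne') (norm3 x)⁻¹
  rw [← norm3_sq, ← mul_inv] at hp
  refine ⟨hp, fun _ => ?_⟩
  have hℓx : x ⨯₃ p ⬝ᵥ x = 0 := by rw [dotProduct_comm, dot_self_cross]
  rw [sub_eq_of_eq_add' hp, norm3_smul, norm3_cross_of_dotProduct_eq_zero hℓx,
    abs_of_pos (by positivity)]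
  field_simp

/-- with `ℓ = x × p`, `a = p × ℓ − x/|x|`: if `ℓ ≠ 0` then
`p = (ℓ × a)/‖ℓ‖² + (ℓ × x)/(‖ℓ‖² |x|)`; if moreover `G(x,p) = −1/2`, then
`‖p − (ℓ × a)/‖ℓ‖²‖ = 1/‖ℓ‖`. -/
theorem stmt2 (x p : Fin 3 → ℝ) (hx : x ≠ 0)
    (hl : cross3 x p ≠ 0) :
    p = (norm3 (cross3 x p) ^ 2)⁻¹ •
          cross3 (cross3 x p) (cross3 p (cross3 x p) - (norm3 x)⁻¹ • x)
        + (norm3 (cross3 x p) ^ 2 * norm3 x)⁻¹ • cross3 (cross3 x p) x ∧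
    (keplerG x p = -(1/2) →
      norm3 (p - (norm3 (cross3 x p) ^ 2)⁻¹ •
          cross3 (cross3 x p) (cross3 p (cross3 x p) - (norm3 x)⁻¹ • x))
        = 1 / norm3 (cross3 x p)) :=
  stmt2_general x p hl
end

section
/- Fix an integer n ≥ 1 and N ∈ ℕ. For any two elements α, α′ of 𝒜ₙ = {α ∈ ℂ^{n+1} : |Re α| = |Im α| = 1 and Re α · Im α = 0}, one has ∫_{𝕊ⁿ} |α·ω|^{2N} dΩ(ω) = ∫_{𝕊ⁿ} |α′·ω|^{2N} dΩ(ω); that is, the normalization integral of the coherent states Φ_{α,N}(ω) = a(N)(α·ω)^N is independent of α ∈ 𝒜ₙ. -/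
/-!
Writing `α = a + i b` with `a, b ∈ ℝ^{n+1}`, one has `α·ω = ⟪a, ω⟫ + i ⟪b, ω⟫`, and `α ∈ 𝒜ₙ` says
exactly that `(a, b)` is an orthonormal pair. Any two orthonormal pairs are related by a linear
isometry `e` of `ℝ^{n+1}`, so `α·(e ω) = α′·ω`; since `e` preserves Lebesgue measure, it preserves
the surface measure of the unit sphere, and the two integrals agree.
-/

open MeasureTheory

/-- The bilinear pairing `α·ω = Σ αⱼ ωⱼ` (no conjugation) of `α ∈ ℂ^{n+1}` with
`ω ∈ ℝ^{n+1}`. -/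
noncomputable def cdot {n : ℕ} (α : Fin (n + 1) → ℂ) (ω : EuclideanSpace ℝ (Fin (n + 1))) : ℂ :=
  ∑ j, α j * (ω j : ℂ)

/-- Membership in `𝒜ₙ = {α ∈ ℂ^{n+1} : |Re α| = |Im α| = 1, Re α · Im α = 0}`. -/
def memA {n : ℕ} (α : Fin (n + 1) → ℂ) : Prop :=
  (∑ j, (α j).re ^ 2) = 1 ∧ (∑ j, (α j).im ^ 2) = 1 ∧ (∑ j, (α j).re * (α j).im) = 0

open Metric Set
open scoped Pointwise RealInnerProductSpace

theorem Orthonormal.exists_linearIsometryEquiv_apply_eq {𝕜 E ι : Type*} [RCLike 𝕜]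
    [NormedAddCommGroup E] [InnerProductSpace 𝕜 E] [FiniteDimensional 𝕜 E] {v w : ι → E}
    (hv : Orthonormal 𝕜 v) (hw : Orthonormal 𝕜 w) : ∃ e : E ≃ₗᵢ[𝕜] E, ∀ i, e (v i) = w i := by
  classical
  let b := Module.Basis.span hv.linearIndependent
  have hbv : ∀ i, (b i : E) = v i := Module.Basis.coe_span_apply _
  have hb : Orthonormal 𝕜 b := by
    rw [orthonormal_iff_ite] at hv ⊢
    intro i j
    simpa only [Submodule.coe_inner, hbv] using hv i j
  have hbw : b.constr 𝕜 w ∘ b = w := funext fun i => by simp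
  let L := (b.constr 𝕜 w).isometryOfOrthonormal hb (by rwa [hbw])
  refine ⟨L.extend.toLinearIsometryEquiv rfl, fun i => ?_⟩
  simpa [hbv, L] using L.extend_apply (b i)

namespace LinearIsometryEquiv

variable {E : Type*} [NormedAddCommGroup E] [InnerProductSpace ℝ E]

def sphereHomeomorph (e : E ≃ₗᵢ[ℝ] E) : sphere (0 : E) 1 ≃ₜ sphere (0 : E) 1 :=
  e.toHomeomorph.sets (by simp [e.preimage_sphere])

theorem image_val_preimage_sphereHomeomorph (e : E ≃ₗᵢ[ℝ] E) (s : Set (sphere (0 : E) 1)) :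
    ((↑) '' (e.sphereHomeomorph ⁻¹' s) : Set E) = e ⁻¹' ((↑) '' s) := by
  rw [← Homeomorph.image_symm, image_image, ← e.symm_symm, ← e.symm.image_eq_preimage_symm,
    image_image]
  rfl

theorem preimage_set_smul (e : E ≃ₗᵢ[ℝ] E) (s : Set ℝ) (t : Set E) :
    e ⁻¹' (s • t) = s • e ⁻¹' t := by
  rw [← e.symm_symm, ← e.symm.image_eq_preimage_symm, ← e.symm.image_eq_preimage_symm]
  simp only [← iUnion_smul_set, image_iUnion₂, image_smul_set]

variable [FiniteDimensional ℝ E] [MeasurableSpace E] [BorelSpace E]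

theorem measurePreserving_sphereHomeomorph (e : E ≃ₗᵢ[ℝ] E) :
    MeasurePreserving e.sphereHomeomorph (volume : Measure E).toSphere
      (volume : Measure E).toSphere := by
  refine ⟨e.sphereHomeomorph.measurable, Measure.ext fun s hs => ?_⟩
  rw [Measure.map_apply e.sphereHomeomorph.measurable hs,
    Measure.toSphere_apply' _ (e.sphereHomeomorph.measurable hs), Measure.toSphere_apply' _ hs,
    image_val_preimage_sphereHomeomorph, ← preimage_set_smul,
    e.measurePreserving.measure_preimage_emb e.toHomeomorph.measurableEmbedding]

theorem integral_toSphere_comp {F : Type*} [NormedAddCommGroup F] [NormedSpace ℝ F]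
    (e : E ≃ₗᵢ[ℝ] E) (f : E → F) :
    ∫ ω : sphere (0 : E) 1, f (e ω) ∂(volume : Measure E).toSphere =
      ∫ ω : sphere (0 : E) 1, f ω ∂(volume : Measure E).toSphere :=
  e.measurePreserving_sphereHomeomorph.integral_comp e.sphereHomeomorph.measurableEmbedding
    fun ω => f ω

end LinearIsometryEquiv

def reVec {ι : Type*} (α : ι → ℂ) : EuclideanSpace ℝ ι := WithLp.toLp 2 fun j => (α j).re

def imVec {ι : Type*} (α : ι → ℂ) : EuclideanSpace ℝ ι := WithLp.toLp 2 fun j => (α j).im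

theorem cdot_eq_inner_reVec_add_inner_imVec {n : ℕ} (α : Fin (n + 1) → ℂ)
    (ω : EuclideanSpace ℝ (Fin (n + 1))) :
    cdot α ω = (⟪reVec α, ω⟫ : ℂ) + (⟪imVec α, ω⟫ : ℂ) * Complex.I := by
  simp only [cdot, reVec, imVec, PiLp.inner_apply, RCLike.inner_apply, conj_trivial]
  push_cast
  rw [Finset.sum_mul, ← Finset.sum_add_distrib]
  refine Finset.sum_congr rfl fun j _ => ?_
  conv_lhs => rw [← Complex.re_add_im (α j)]
  ring

theorem orthonormal_reVec_imVec {n : ℕ} {α : Fin (n + 1) → ℂ} (hα : memA α) :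
    Orthonormal ℝ ![reVec α, imVec α] := by
  obtain ⟨hre, him, hreim⟩ := hα
  rw [orthonormal_iff_ite]
  simp [Fin.forall_fin_two, reVec, imVec, PiLp.inner_apply, ← sq, hre, him, hreim, mul_comm]

theorem exists_linearIsometryEquiv_cdot_apply_eq {n : ℕ} {α α' : Fin (n + 1) → ℂ}
    (hα : memA α) (hα' : memA α') :
    ∃ e : EuclideanSpace ℝ (Fin (n + 1)) ≃ₗᵢ[ℝ] EuclideanSpace ℝ (Fin (n + 1)),
      ∀ ω, cdot α (e ω) = cdot α' ω := by
  obtain ⟨e, he⟩ :=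
    (orthonormal_reVec_imVec hα').exists_linearIsometryEquiv_apply_eq (orthonormal_reVec_imVec hα)
  have hre : e (reVec α') = reVec α := he 0
  have him : e (imVec α') = imVec α := he 1
  refine ⟨e, fun ω => ?_⟩
  rw [cdot_eq_inner_reVec_add_inner_imVec, cdot_eq_inner_reVec_add_inner_imVec,
    ← e.inner_map_map (reVec α'), ← e.inner_map_map (imVec α'), hre, him]

theorem stmt8_general (n : ℕ) (N : ℕ) (α α' : Fin (n + 1) → ℂ)
    (hα : memA α) (hα' : memA α') :
    ∫ ω : Metric.sphere (0 : EuclideanSpace ℝ (Fin (n + 1))) 1,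
        ‖cdot α (ω : EuclideanSpace ℝ (Fin (n + 1)))‖ ^ (2 * N)
        ∂((volume : Measure (EuclideanSpace ℝ (Fin (n + 1)))).toSphere) =
      ∫ ω : Metric.sphere (0 : EuclideanSpace ℝ (Fin (n + 1))) 1,
        ‖cdot α' (ω : EuclideanSpace ℝ (Fin (n + 1)))‖ ^ (2 * N)
        ∂((volume : Measure (EuclideanSpace ℝ (Fin (n + 1)))).toSphere) := by
  obtain ⟨e, he⟩ := exists_linearIsometryEquiv_cdot_apply_eq hα hα'
  simp_rw [← he]
  exact (e.integral_toSphere_comp fun x => ‖cdot α x‖ ^ (2 * N)).symm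

/-- for `α, α′ ∈ 𝒜ₙ`, the normalization integrals
`∫_{𝕊ⁿ} |α·ω|^{2N} dΩ` coincide. -/
theorem stmt8 (n : ℕ) (hn : 1 ≤ n) (N : ℕ) (α α' : Fin (n + 1) → ℂ)
    (hα : memA α) (hα' : memA α') :
    ∫ ω : Metric.sphere (0 : EuclideanSpace ℝ (Fin (n + 1))) 1,
        ‖cdot α (ω : EuclideanSpace ℝ (Fin (n + 1)))‖ ^ (2 * N)
        ∂((volume : Measure (EuclideanSpace ℝ (Fin (n + 1)))).toSphere) =
      ∫ ω : Metric.sphere (0 : EuclideanSpace ℝ (Fin (n + 1))) 1,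
        ‖cdot α' (ω : EuclideanSpace ℝ (Fin (n + 1)))‖ ^ (2 * N)
        ∂((volume : Measure (EuclideanSpace ℝ (Fin (n + 1)))).toSphere) :=
  stmt8_general n N α α' hα hα'
end

section
/- Let ρ : ℝ → ℝ be continuous and let B ∈ ℝ. Then ∫₀^{π/2} ( ∫₀^{π} ρ( −(B/2) cos ψ cos θ ) sin θ dθ ) cos ψ sin ψ dψ = ∫_{−1}^{1} ρ( −(B/2) u ) (1 − |u|) du. -/
/-!
The substitution `u = cos θ` turns the inner integral, multiplied by `cos ψ`, into
`∫_{-cos ψ}^{cos ψ} ρ(-(B/2)u) du`, and the substitution `t = cos ψ` turns the outer one into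
`∫₀¹ ∫_{-t}^{t} ρ(-(B/2)u) du dt`. Integrating by parts against `t - 1` (or exchanging the order of
integration) weighs each `u` with the length `1 - |u|` of `{t ∈ [0, 1] : |u| ≤ t}`.
-/

open Real intervalIntegral

theorem intervalIntegral.integral_comp_cos_mul_sin {f : ℝ → ℝ} (hf : Continuous f) (a b : ℝ) :
    ∫ x in a..b, f (cos x) * sin x = ∫ u in cos b..cos a, f u := by
  have h := integral_comp_mul_deriv (fun x _ => hasDerivAt_cos x)
    continuous_sin.neg.continuousOn hf (a := a) (b := b)
  simp only [Function.comp_apply, mul_neg, integral_neg] at h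
  rw [integral_symm (cos a), ← h, neg_neg]

theorem intervalIntegral.integral_comp_mul_cos_mul_sin_mul {g : ℝ → ℝ} (hg : Continuous g)
    (a : ℝ) : (∫ θ in (0 : ℝ)..π, g (a * cos θ) * sin θ) * a = ∫ u in -a..a, g u := by
  rw [integral_comp_cos_mul_sin (f := fun v => g (a * v)) (by fun_prop), mul_comm]
  simp

theorem hasDerivAt_integral_neg_self {g : ℝ → ℝ} (hg : Continuous g) (t : ℝ) :
    HasDerivAt (fun t => ∫ u in -t..t, g u) (g t + g (-t)) t := by
  have hF (x : ℝ) : HasDerivAt (fun x => ∫ u in (0 : ℝ)..x, g u) (g x) x :=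
    (hg.integral_hasStrictDerivAt 0 x).hasDerivAt
  have hsub : (fun t => ∫ u in -t..t, g u) =
      fun t => (∫ u in (0 : ℝ)..t, g u) - ∫ u in (0 : ℝ)..-t, g u := by
    ext t
    rw [integral_interval_sub_left (hg.intervalIntegrable _ _) (hg.intervalIntegrable _ _)]
  rw [hsub]
  exact ((hF t).fun_sub ((hF (-t)).comp t (hasDerivAt_neg t))).congr_deriv (by ring)

theorem continuous_integral_neg_self {g : ℝ → ℝ} (hg : Continuous g) :
    Continuous fun t => ∫ u in -t..t, g u :=
  continuous_iff_continuousAt.2 fun t => (hasDerivAt_integral_neg_self hg t).continuousAt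

theorem integral_integral_neg_self {g : ℝ → ℝ} (hg : Continuous g) {r : ℝ} (hr : 0 ≤ r) :
    ∫ t in (0 : ℝ)..r, ∫ u in -t..t, g u = ∫ u in -r..r, g u * (r - |u|) := by
  set h : ℝ → ℝ := fun u => g u * (r - |u|)
  have hh : Continuous h := hg.mul (continuous_const.sub continuous_abs)
  have parts := integral_mul_deriv_eq_deriv_mul (a := 0) (b := r) (v := fun t => t - r)
    (fun t _ => hasDerivAt_integral_neg_self hg t) (fun t _ => (hasDerivAt_id t).sub_const r)
    ((hg.add (hg.comp continuous_neg)).intervalIntegrable _ _) intervalIntegrable_const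
  have weight : ∫ t in (0 : ℝ)..r, (g t + g (-t)) * (t - r) =
      -∫ t in (0 : ℝ)..r, (h t + h (-t)) := by
    rw [← integral_neg]
    refine integral_congr fun t ht => ?_
    rw [Set.uIcc_of_le hr] at ht
    simp only [h, abs_neg, abs_of_nonneg ht.1]
    ring
  simp only [mul_one, sub_self, mul_zero, neg_zero, integral_same, zero_mul, zero_sub, neg_neg,
    weight] at parts
  rw [parts, integral_add (f := h) (g := fun t => h (-t)) (hh.intervalIntegrable _ _)
      ((hh.comp continuous_neg).intervalIntegrable _ _),
    integral_comp_neg, neg_zero, add_comm,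
    integral_add_adjacent_intervals (hh.intervalIntegrable _ _) (hh.intervalIntegrable _ _)]

theorem integral_integral_comp_cos_mul_cos {g : ℝ → ℝ} (hg : Continuous g) :
    (∫ ψ in (0 : ℝ)..(π / 2),
      (∫ θ in (0 : ℝ)..π, g (cos ψ * cos θ) * sin θ) * (cos ψ * sin ψ)) =
    ∫ u in (-1 : ℝ)..1, g u * (1 - |u|) := by
  calc (∫ ψ in (0 : ℝ)..(π / 2),
        (∫ θ in (0 : ℝ)..π, g (cos ψ * cos θ) * sin θ) * (cos ψ * sin ψ))
      = ∫ ψ in (0 : ℝ)..(π / 2), (∫ u in -cos ψ..cos ψ, g u) * sin ψ := by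
        simp only [← mul_assoc, integral_comp_mul_cos_mul_sin_mul hg]
    _ = ∫ t in (0 : ℝ)..1, ∫ u in -t..t, g u := by
        simpa using integral_comp_cos_mul_sin (continuous_integral_neg_self hg) 0 (π / 2)
    _ = ∫ u in (-1 : ℝ)..1, g u * (1 - |u|) := integral_integral_neg_self hg zero_le_one

/-- for continuous `ρ` and `B ∈ ℝ`,
`∫₀^{π/2}(∫₀^π ρ(−(B/2)cosψcosθ) sinθ dθ) cosψ sinψ dψ = ∫_{−1}^{1} ρ(−(B/2)u)(1−|u|)du`. -/
theorem stmt14 (ρ : ℝ → ℝ) (hρ : Continuous ρ) (B : ℝ) :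
    (∫ ψ in (0 : ℝ)..(Real.pi / 2),
      (∫ θ in (0 : ℝ)..Real.pi, ρ (-(B / 2) * Real.cos ψ * Real.cos θ) * Real.sin θ) *
        (Real.cos ψ * Real.sin ψ)) =
    ∫ u in (-1 : ℝ)..1, ρ (-(B / 2) * u) * (1 - |u|) := by
  simpa only [mul_assoc] using
    integral_integral_comp_cos_mul_cos (g := fun u => ρ (-(B / 2) * u)) (by fun_prop)
end
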